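/- arXiv:0901.0759 — 5 statements merged into one kernel-verified Lean document; each statement's English description precedes it below -/
import Mathlib

section
/- For every involution α of ZMod 7 (a permutation with α ∘ α = id) there exists i ∈ ZMod 7 such that every orbit of the action on ZMod 7 of the subgroup of permutations generated by α and τ_i contains a point that is fixed by α or fixed by τ_i. -/
/-!
Since `α` and `τ_i` are involutions, the orbits of `⟨α, τ_i⟩` are the components of the graph
whose edges are the 2-cycles of `α` and of `τ_i`: every point has degree at most 2, so each orbit
is a path or a cycle, and the orbits containing a fixed point are the paths. On 7 points a path
has at most 7 vertices, so every vertex is within 3 steps of an end, and this reachability can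
be checked by evaluation.

The translation `x ↦ x + c` conjugates `τ_i` to `τ_(i+c)`, and an involution of a set of odd size
has a fixed point, so it suffices to check the 76 involutions of `ZMod 7` fixing `0`.
-/

/-- For `i : ZMod n`, the permutation `τ_i` of `ZMod n` that swaps `i` with `i+5`,
`i+1` with `i+3`, `i+2` with `i+4`, and fixes every other element (the three
transpositions are disjoint as soon as `n ≥ 7`). -/
def tau {n : ℕ} (i : ZMod n) : Equiv.Perm (ZMod n) :=
  Equiv.swap i (i + 5) * Equiv.swap (i + 1) (i + 3) * Equiv.swap (i + 2) (i + 4)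

namespace Equiv.Perm

variable {X : Type*} [DecidableEq X]

def reachesFixedPoint (a t : Perm X) : ℕ → X → Bool
  | 0, y => a y = y ∨ t y = y
  | n + 1, y => reachesFixedPoint a t n y || reachesFixedPoint a t n (a y) ||
      reachesFixedPoint a t n (t y)

theorem exists_mem_orbit_closure_pair_of_reachesFixedPoint {a t : Perm X} {n : ℕ} {y : X}
    (h : reachesFixedPoint a t n y) :
    ∃ z ∈ MulAction.orbit (Subgroup.closure {a, t}) y, a z = z ∨ t z = z := by
  induction n generalizing y with
  | zero => exact ⟨y, MulAction.mem_orbit_self y, of_decide_eq_true h⟩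
  | succ n ih =>
    have orbit_apply {g : Perm X} (hg : g ∈ Subgroup.closure {a, t}) :
        MulAction.orbit (Subgroup.closure {a, t}) (g y) = MulAction.orbit _ y :=
      MulAction.orbit_smul (⟨g, hg⟩ : Subgroup.closure {a, t}) y
    simp only [reachesFixedPoint, Bool.or_eq_true] at h
    rcases h with (h | h) | h
    · exact ih h
    · rw [← orbit_apply (Subgroup.subset_closure (Set.mem_insert a _))]; exact ih h
    · rw [← orbit_apply (Subgroup.subset_closure (Set.mem_insert_of_mem a rfl))]; exact ih h

theorem reachesFixedPoint_conj (r a t : Perm X) (n : ℕ) (y : X) :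
    reachesFixedPoint (r * a * r⁻¹) (r * t * r⁻¹) n (r y) = reachesFixedPoint a t n y := by
  induction n generalizing y with
  | zero => simp [reachesFixedPoint]
  | succ n ih => simp [reachesFixedPoint, ← ih]

end Equiv.Perm

open Equiv Equiv.Perm

theorem tau_add {n : ℕ} (i c : ZMod n) :
    tau (i + c) = Equiv.addRight c * tau i * (Equiv.addRight c)⁻¹ := by
  change _ = MulAut.conj (Equiv.addRight c) (tau i)
  simp only [tau, map_mul, MulAut.conj_apply, ← swap_apply_apply, coe_addRight, add_right_comm _ c]

set_option maxRecDepth 10000 in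
theorem exists_tau_reachesFixedPoint_of_apply_zero_eq_zero :
    ∀ α : Perm (ZMod 7), α 0 = 0 → (∀ x, α (α x) = x) →
      ∃ i : ZMod 7, ∀ x, reachesFixedPoint α (tau i) 3 x := by
  decide +kernel

theorem exists_tau_reachesFixedPoint (α : Perm (ZMod 7)) (hα : ∀ x, α (α x) = x) :
    ∃ i : ZMod 7, ∀ x, reachesFixedPoint α (tau i) 3 x := by
  obtain ⟨c, hc⟩ : ∃ c, α c = c :=
    exists_fixed_point_of_prime (p := 2) (n := 1) (by decide) (Equiv.ext hα)
  set r := Equiv.addRight c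
  obtain ⟨i, hi⟩ := exists_tau_reachesFixedPoint_of_apply_zero_eq_zero (r⁻¹ * α * r)
    (by simp [r, hc]) (by simp [r, hα])
  refine ⟨i + c, fun x => ?_⟩
  have h := reachesFixedPoint_conj r (r⁻¹ * α * r) (tau i) 3 (r⁻¹ x)
  rw [hi, show r * (r⁻¹ * α * r) * r⁻¹ = α by group, ← tau_add] at h
  simpa using h

/-- For every involution `α` of `ZMod 7` there exists `i` such that every orbit of the
subgroup generated by `α` and `τ_i` contains a point fixed by `α` or fixed by `τ_i`. -/
theorem exists_tau_orbits_with_fixed_points_seven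
    (α : Equiv.Perm (ZMod 7)) (hα : ∀ x, α (α x) = x) :
    ∃ i : ZMod 7, ∀ x : ZMod 7,
      ∃ y ∈ MulAction.orbit (Subgroup.closure {α, tau i} : Subgroup (Equiv.Perm (ZMod 7))) x,
        α y = y ∨ tau i y = y := by
  obtain ⟨i, hi⟩ := exists_tau_reachesFixedPoint α hα
  exact ⟨i, fun x => exists_mem_orbit_closure_pair_of_reachesFixedPoint (hi x)⟩
end

section
/- Let n be an odd integer with n ≥ 7. For every involution α of ZMod n (a permutation with α ∘ α = id) there exists i ∈ ZMod n such that every orbit of the action on ZMod n of the subgroup of permutations generated by α and τ_i contains a point that is fixed by α or fixed by τ_i. -/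
open Equiv MulAction Function

section Permutations

variable {M : Type*}

theorem Function.Involutive.exists_apply_eq_self_of_odd_card [Fintype M] {σ : Perm M}
    (hσ : Involutive σ) (hM : Odd (Fintype.card M)) : ∃ a, σ a = a :=
  haveI : Fact (Nat.Prime 2) := ⟨Nat.prime_two⟩
  Perm.exists_fixed_point_of_prime (p := 2) (n := 1) (by simpa [← even_iff_two_dvd] using hM)
    (by ext a; simp [sq, hσ a])

def HasFixedPointFreeOrbit (α τ : Perm M) : Prop :=
  ∃ x, ∀ y ∈ orbit (Subgroup.closure {α, τ} : Subgroup (Perm M)) x, α y ≠ y ∧ τ y ≠ y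

/-- The ways in which a nonempty union of the pairs `{p, p'}`, `{q, q'}` can be `α`-invariant
without containing a fixed point of `α`. -/
def LinksPairs (α : M → M) (p p' q q' : M) : Prop :=
  α p = p' ∨ α q = q' ∨ (α p = q ∧ α p' = q') ∨ (α p = q' ∧ α p' = q)

/-- The orbit cannot meet `{e, e'}`, since `α` fixes one of these points and `τ` swaps them,
so it is contained in `{p, p', q, q'}`. -/
theorem HasFixedPointFreeOrbit.linksPairs {α τ : Perm M} (hα : Involutive α)
    {e e' p p' q q' : M} (he : τ e = e') (he' : τ e' = e) (hp : τ p = p') (hp' : τ p' = p)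
    (hq : τ q = q') (hq' : τ q' = q)
    (hsupp : ∀ y, τ y ≠ y → y = e ∨ y = e' ∨ y = p ∨ y = p' ∨ y = q ∨ y = q')
    (hfix : α e = e ∨ α e' = e') (h : HasFixedPointFreeOrbit α τ) : LinksPairs α p p' q q' := by
  obtain ⟨x, hx⟩ := h
  set O := orbit (Subgroup.closure {α, τ} : Subgroup (Perm M)) x
  have hαO : ∀ y ∈ O, α y ∈ O := fun y hy =>
    mem_orbit_of_mem_orbit (⟨α, Subgroup.subset_closure (by simp)⟩ : Subgroup.closure _) hy
  have hτO : ∀ y ∈ O, τ y ∈ O := fun y hy =>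
    mem_orbit_of_mem_orbit (⟨τ, Subgroup.subset_closure (by simp)⟩ : Subgroup.closure _) hy
  have hO : ∀ y ∈ O, y = p ∨ y = p' ∨ y = q ∨ y = q' := by
    intro y hy
    have hτy := hx _ (hτO _ hy)
    grind
  have hxO : x ∈ O := mem_orbit_self x
  unfold LinksPairs
  grind [Involutive]

/-- `w k` stands for the point at offset `k` from a fixed point of `α` (`hw` allows `w` to wrap
around at distance `7`), and `h0`, …, `h5` are the conditions forced by `τ_i` for `i` at offset
`0, -1, -2, -3, -5`. -/
theorem false_of_linksPairs_windows {α : M → M} (hα : Involutive α) {w : ℤ → M}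
    (hw : ∀ j k, w j = w k → j = k ∨ 7 ≤ |j - k|)
    (h0 : LinksPairs α (w 1) (w 3) (w 2) (w 4))
    (h1 : LinksPairs α (w (-1)) (w 4) (w 1) (w 3))
    (h2 : LinksPairs α (w (-2)) (w 3) (w (-1)) (w 1))
    (h3 : LinksPairs α (w (-3)) (w 2) (w (-1)) (w 1))
    (h5 : LinksPairs α (w (-4)) (w (-2)) (w (-3)) (w (-1))) : False := by
  unfold LinksPairs at *
  grind [Involutive]

end Permutations

section Tau

variable {n : ℕ}

theorem tau_apply_add (hn : 6 ≤ n) (i : ZMod n) (k : Fin 6) :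
    tau i (i + (k : ℕ)) = i + ((swap 0 5 * swap 1 3 * swap 2 4 : Perm (Fin 6)) k : ℕ) := by
  set e : Fin 6 → ZMod n := fun k => i + (k : ℕ)
  have he : Injective e := by
    intro a b hab
    have := (ZMod.natCast_eq_natCast_iff' _ _ _).mp (add_left_cancel hab)
    rw [Nat.mod_eq_of_lt (by omega), Nat.mod_eq_of_lt (by omega)] at this
    exact Fin.ext this
  have htau : tau i = swap (e 0) (e 5) * swap (e 1) (e 3) * swap (e 2) (e 4) := by
    simp [tau, e]
  change tau i (e k) = e _
  rw [htau]
  simp only [Perm.mul_apply, he.swap_apply]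

theorem tau_apply_pairs (hn : 6 ≤ n) (i : ZMod n) :
    tau i i = i + 5 ∧ tau i (i + 5) = i ∧ tau i (i + 1) = i + 3 ∧ tau i (i + 3) = i + 1 ∧
      tau i (i + 2) = i + 4 ∧ tau i (i + 4) = i + 2 := by
  have h := tau_apply_add hn i
  refine ⟨?_, ?_, ?_, ?_, ?_, ?_⟩
  · simpa [swap_apply_def] using h 0
  · simpa [swap_apply_def] using h 5
  · simpa [swap_apply_def] using h 1
  · simpa [swap_apply_def] using h 3
  · simpa [swap_apply_def] using h 2
  · simpa [swap_apply_def] using h 4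

theorem eq_of_tau_apply_ne {i y : ZMod n} (h : tau i y ≠ y) :
    y = i ∨ y = i + 5 ∨ y = i + 1 ∨ y = i + 3 ∨ y = i + 2 ∨ y = i + 4 := by
  contrapose! h
  obtain ⟨h0, h5, h1, h3, h2, h4⟩ := h
  simp [tau, swap_apply_of_ne_of_ne, *]

theorem HasFixedPointFreeOrbit.linksPairs_tau (hn : 6 ≤ n) {α : Perm (ZMod n)}
    (hα : Involutive α) {i : ZMod n} (h : HasFixedPointFreeOrbit α (tau i)) :
    (α i = i ∨ α (i + 5) = i + 5 → LinksPairs α (i + 1) (i + 3) (i + 2) (i + 4)) ∧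
    (α (i + 1) = i + 1 ∨ α (i + 3) = i + 3 → LinksPairs α i (i + 5) (i + 2) (i + 4)) ∧
    (α (i + 2) = i + 2 ∨ α (i + 4) = i + 4 → LinksPairs α i (i + 5) (i + 1) (i + 3)) := by
  obtain ⟨t0, t5, t1, t3, t2, t4⟩ := tau_apply_pairs hn i
  have hsupp := @eq_of_tau_apply_ne n i
  refine ⟨fun hfix => h.linksPairs hα t0 t5 t1 t3 t2 t4 ?_ hfix,
    fun hfix => h.linksPairs hα t1 t3 t0 t5 t2 t4 ?_ hfix,
    fun hfix => h.linksPairs hα t2 t4 t0 t5 t1 t3 ?_ hfix⟩ <;> grind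

theorem ZMod.eq_or_le_abs_sub_of_intCast_eq {j k : ℤ} (h : (j : ZMod n) = k) :
    j = k ∨ n ≤ |j - k| := by
  have hdvd := (ZMod.intCast_eq_intCast_iff_dvd_sub _ _ _).mp h
  rcases eq_or_ne j k with hjk | hjk
  · exact .inl hjk
  · exact .inr (Int.le_of_dvd (abs_pos.mpr (sub_ne_zero.mpr hjk))
      ((dvd_abs _ _).mpr (dvd_sub_comm.mp hdvd)))

end Tau

/-- For every odd `n ≥ 7` and every involution `α` of `ZMod n` there exists `i` such
that every orbit of the subgroup generated by `α` and `τ_i` contains a point fixed by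
`α` or fixed by `τ_i`. -/
theorem exists_tau_orbits_with_fixed_points_odd
    (n : ℕ) (hodd : Odd n) (hn : 7 ≤ n)
    (α : Equiv.Perm (ZMod n)) (hα : ∀ x, α (α x) = x) :
    ∃ i : ZMod n, ∀ x : ZMod n,
      ∃ y ∈ MulAction.orbit (Subgroup.closure {α, tau i} : Subgroup (Equiv.Perm (ZMod n))) x,
        α y = y ∨ tau i y = y := by
  have : NeZero n := ⟨by omega⟩
  obtain ⟨f, hf⟩ := Involutive.exists_apply_eq_self_of_odd_card hα (by rwa [ZMod.card])
  by_contra! h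
  let w : ℤ → ZMod n := fun k => f + k
  have hw (j k : ℤ) (hjk : w j = w k) : j = k ∨ 7 ≤ |j - k| :=
    (ZMod.eq_or_le_abs_sub_of_intCast_eq (add_left_cancel hjk)).imp_right (by omega)
  have links (a : ℤ) :
      (α (w a) = w a ∨ α (w (a + 5)) = w (a + 5) →
        LinksPairs α (w (a + 1)) (w (a + 3)) (w (a + 2)) (w (a + 4))) ∧
      (α (w (a + 1)) = w (a + 1) ∨ α (w (a + 3)) = w (a + 3) →
        LinksPairs α (w a) (w (a + 5)) (w (a + 2)) (w (a + 4))) ∧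
      (α (w (a + 2)) = w (a + 2) ∨ α (w (a + 4)) = w (a + 4) →
        LinksPairs α (w a) (w (a + 5)) (w (a + 1)) (w (a + 3))) := by
    have hshift (k : ℤ) : w (a + k) = w a + k := by simp only [w]; push_cast; ring
    simpa only [hshift, Int.cast_one, Int.cast_ofNat] using
      HasFixedPointFreeOrbit.linksPairs_tau (by omega) hα (h (w a))
  have hf0 : α (w 0) = w 0 := by simpa [w] using hf
  have h0 := (links 0).1 (.inl hf0)
  have h1 := (links (-1)).2.1 (.inl (by simpa using hf0))
  have h2 := (links (-2)).2.2 (.inl (by simpa using hf0))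
  have h3 := (links (-3)).2.1 (.inr (by simpa using hf0))
  have h5 := (links (-5)).1 (.inr (by simpa using hf0))
  norm_num at h0 h1 h2 h3 h5
  exact false_of_linksPairs_windows hα hw h0 h1 h2 h3 h5
end

section
/- Let n ≥ 1 and let c : ZMod n → ZMod 2. If there exists k ∈ ZMod n with c(k) ≠ c(k+5), c(k+1) ≠ c(k+3), and c(k+2) ≠ c(k+4), then there exists k' ∈ ZMod n with c(k') = c(k'+1), c(k'+2) = c(k'+3), and c(k'+1) ≠ c(k'+2). -/
/-! Write `aᵢ = c (k + i)`. With only two colours, `a₃ ≠ a₁` and `a₄ ≠ a₂` force `a₃ = a₄` as soon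
as `a₁ = a₂`, and then `k + 1` works. Otherwise `a₃ = a₂` and `a₄ = a₁`, and since `a₀ ≠ a₅` one of
`a₀`, `a₅` equals `a₁`: then `k` resp. `k + 2` works. -/

lemma ZMod.two_window_cases (a₀ a₁ a₂ a₃ a₄ a₅ : ZMod 2)
    (h₀₅ : a₀ ≠ a₅) (h₁₃ : a₁ ≠ a₃) (h₂₄ : a₂ ≠ a₄) :
    (a₀ = a₁ ∧ a₂ = a₃ ∧ a₁ ≠ a₂) ∨ (a₁ = a₂ ∧ a₃ = a₄ ∧ a₂ ≠ a₃) ∨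
      (a₂ = a₃ ∧ a₄ = a₅ ∧ a₃ ≠ a₄) := by
  revert a₀ a₁ a₂ a₃ a₄ a₅
  decide

theorem exists_doubled_switch_of_window {R : Type*} [AddMonoidWithOne R] (c : R → ZMod 2)
    {k : R} (h₀₅ : c k ≠ c (k + 5)) (h₁₃ : c (k + 1) ≠ c (k + 3)) (h₂₄ : c (k + 2) ≠ c (k + 4)) :
    ∃ k', c k' = c (k' + 1) ∧ c (k' + 2) = c (k' + 3) ∧ c (k' + 1) ≠ c (k' + 2) := by
  rcases ZMod.two_window_cases _ _ _ _ _ _ h₀₅ h₁₃ h₂₄ with h | h | h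
  · exact ⟨k, h⟩
  · exact ⟨k + 1, by norm_num [add_assoc]; exact h⟩
  · exact ⟨k + 2, by norm_num [add_assoc]; exact h⟩

theorem exists_good_index_general (n : ℕ) (c : ZMod n → ZMod 2)
    (h : ∃ k : ZMod n, c k ≠ c (k + 5) ∧ c (k + 1) ≠ c (k + 3) ∧ c (k + 2) ≠ c (k + 4)) :
    ∃ k' : ZMod n, c k' = c (k' + 1) ∧ c (k' + 2) = c (k' + 3) ∧ c (k' + 1) ≠ c (k' + 2) := by
  obtain ⟨k, h₀₅, h₁₃, h₂₄⟩ := h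
  exact exists_doubled_switch_of_window c h₀₅ h₁₃ h₂₄

/-- If a 2-coloring `c` of `ZMod n` admits an index `k` with `c k ≠ c (k+5)`,
`c (k+1) ≠ c (k+3)` and `c (k+2) ≠ c (k+4)`, then it admits an index `k'` with
`c k' = c (k'+1)`, `c (k'+2) = c (k'+3)` and `c (k'+1) ≠ c (k'+2)`. -/
theorem exists_good_index (n : ℕ) (hn : 1 ≤ n) (c : ZMod n → ZMod 2)
    (h : ∃ k : ZMod n, c k ≠ c (k + 5) ∧ c (k + 1) ≠ c (k + 3) ∧ c (k + 2) ≠ c (k + 4)) :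
    ∃ k' : ZMod n, c k' = c (k' + 1) ∧ c (k' + 2) = c (k' + 3) ∧ c (k' + 1) ≠ c (k' + 2) :=
  exists_good_index_general n c h
end

section
/- Let n be an odd integer with n ≥ 7, and let c : ZMod n → ZMod 2 be such that there exists k' ∈ ZMod n with c(k') = c(k'+1), c(k'+2) = c(k'+3), and c(k'+1) ≠ c(k'+2). Let ι : ZMod 2 → ZMod 7 be the map sending 0 to 0 and 1 to 1. Then there exists f : ZMod n → ZMod 7 such that for every i ∈ ZMod n: f(i) − f(i+1) ∈ {2,3,4,5} ⊆ ZMod 7, f(i) − ι(c(i)) ∈ {2,3,4,5} ⊆ ZMod 7, and f(i) − ι(c(i+1)) ∈ {2,3,4,5} ⊆ ZMod 7. -/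
/-!
Rotate the cycle so that the four matching colours at `v₀, v₁, v₂, v₃` read `0, 0, 1, 1`
(the reflection `x ↦ 1 - x` of `ZMod 7` swaps the matching colours `0` and `1` and preserves
differences up to sign), and colour the cycle edges `2, 4, 6, 3, 5, 3, 5, …, 3, 5`. The colours
`3` and `5` are far from both `0` and `1`, so only the first three edges have to look at the
matching colours; since `n` is odd the alternation ends with `5`, which is far from the first
colour `2`.
-/

/-- The map sending `0 : ZMod 2` to `0 : ZMod 7` and `1` to `1`. -/
def iota : ZMod 2 → ZMod 7 := fun x => if x = 0 then 0 else 1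

def Far (a b : ZMod 7) : Prop := a - b ∈ ({2, 3, 4, 5} : Set (ZMod 7))

instance : DecidableRel Far := fun a b => inferInstanceAs (Decidable (a - b ∈ _))

theorem Far.symm : ∀ {a b : ZMod 7}, Far a b → Far b a := by decide

theorem far_one_sub_one_sub {a b : ZMod 7} : Far (1 - a) (1 - b) ↔ Far b a := by
  rw [Far, Far, sub_sub_sub_cancel_left]

theorem far_one_sub_comm {a b : ZMod 7} : Far (1 - a) b ↔ Far (1 - b) a := by
  rw [Far, Far, sub_right_comm]

theorem iota_add_one : ∀ x : ZMod 2, iota (x + 1) = 1 - iota x := by decide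

theorem far_iota_of_mem : ∀ {v : ZMod 7}, v = 3 ∨ v = 5 → ∀ x : ZMod 2, Far v (iota x) := by
  decide

def IsCycleColoring {n : ℕ} (c : ZMod n → ZMod 2) (f : ZMod n → ZMod 7) : Prop :=
  ∀ i, Far (f i) (f (i + 1)) ∧ Far (f i) (iota (c i)) ∧ Far (f i) (iota (c (i + 1)))

namespace IsCycleColoring

variable {n : ℕ} {c : ZMod n → ZMod 2} {f : ZMod n → ZMod 7}

theorem of_comp_add_right {k : ZMod n} (hf : IsCycleColoring (fun i => c (i + k)) f) :
    IsCycleColoring c (fun i => f (i - k)) := by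
  intro i
  simpa only [sub_add_cancel, sub_add_eq_add_sub] using hf (i - k)

theorem one_sub (hf : IsCycleColoring (fun i => c i + 1) f) :
    IsCycleColoring c (fun i => 1 - f i) := by
  intro i
  obtain ⟨hsucc, hcur, hnext⟩ := hf i
  simp only [iota_add_one] at hcur hnext
  exact ⟨far_one_sub_one_sub.2 hsucc.symm, far_one_sub_comm.2 hcur.symm,
    far_one_sub_comm.2 hnext.symm⟩

end IsCycleColoring

def oddCyclePattern : ℕ → ZMod 7
  | 0 => 2
  | 1 => 4
  | 2 => 6
  | j + 3 => if Even j then 3 else 5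

theorem far_oddCyclePattern_succ (j : ℕ) : Far (oddCyclePattern j) (oddCyclePattern (j + 1)) := by
  match j with
  | 0 | 1 | 2 => decide
  | j + 3 =>
    simp only [oddCyclePattern, Nat.even_add_one]
    split_ifs <;> decide

theorem far_oddCyclePattern_zero {j : ℕ} (hj : 3 ≤ j) (heven : Even j) :
    Far (oddCyclePattern j) (oddCyclePattern 0) := by
  obtain ⟨m, rfl⟩ := Nat.exists_eq_add_of_le' hj
  have hm : ¬Even m := by
    rw [Nat.even_add] at heven
    simpa [parity_simps] using heven
  simp only [oddCyclePattern, hm, if_false]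
  decide

theorem far_oddCyclePattern_succ_mod {n j : ℕ} (hodd : Odd n) (hn : 5 ≤ n) (hj : j < n) :
    Far (oddCyclePattern j) (oddCyclePattern ((j + 1) % n)) := by
  rcases (Nat.add_one_le_of_lt hj).lt_or_eq with hlt | heq
  · rw [Nat.mod_eq_of_lt hlt]
    exact far_oddCyclePattern_succ j
  · rw [heq, Nat.mod_self]
    refine far_oddCyclePattern_zero (by omega) ?_
    obtain ⟨m, rfl⟩ := hodd
    exact ⟨m, by omega⟩

theorem isCycleColoring_oddCyclePattern {n : ℕ} (hodd : Odd n) (hn : 5 ≤ n)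
    {c : ZMod n → ZMod 2} (h0 : c 0 = 0) (h1 : c 1 = 0) (h2 : c 2 = 1) (h3 : c 3 = 1) :
    IsCycleColoring c (fun i => oddCyclePattern i.val) := by
  have : NeZero n := ⟨by omega⟩
  intro i
  obtain ⟨j, hj, rfl⟩ : ∃ j < n, (j : ZMod n) = i := ⟨i.val, i.val_lt, i.natCast_zmod_val⟩
  dsimp only
  rw [← Nat.cast_succ, ZMod.val_natCast, ZMod.val_natCast, Nat.mod_eq_of_lt hj]
  refine ⟨far_oddCyclePattern_succ_mod hodd hn hj, ?_⟩
  match j with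
  | 0 => norm_num [h0, h1]; decide
  | 1 => norm_num [h1, h2]; decide
  | 2 => norm_num [h2, h3]; decide
  | j + 3 =>
    have hmem : oddCyclePattern (j + 3) = 3 ∨ oddCyclePattern (j + 3) = 5 := by
      simp only [oddCyclePattern]
      split_ifs <;> simp
    exact ⟨far_iota_of_mem hmem _, far_iota_of_mem hmem _⟩

theorem exists_isCycleColoring {n : ℕ} (hodd : Odd n) (hn : 5 ≤ n) {c : ZMod n → ZMod 2}
    (h : c 0 = c 1 ∧ c 2 = c 3 ∧ c 1 ≠ c 2) : ∃ f, IsCycleColoring c f := by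
  have hcases : ∀ a b d e : ZMod 2, a = b ∧ d = e ∧ b ≠ d →
      a = 0 ∧ b = 0 ∧ d = 1 ∧ e = 1 ∨ a + 1 = 0 ∧ b + 1 = 0 ∧ d + 1 = 1 ∧ e + 1 = 1 := by
    decide
  rcases hcases _ _ _ _ h with ⟨h0, h1, h2, h3⟩ | ⟨h0, h1, h2, h3⟩
  · exact ⟨_, isCycleColoring_oddCyclePattern hodd hn h0 h1 h2 h3⟩
  · exact ⟨_, (isCycleColoring_oddCyclePattern (c := fun i => c i + 1) hodd hn
      h0 h1 h2 h3).one_sub⟩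

/-- The odd-cycle coloring step: given an odd `n ≥ 7` and matching colors
`c : ZMod n → ZMod 2` admitting a good index `k'`, the edges of the cycle can be
colored by `f : ZMod n → ZMod 7` so that consecutive cycle edges, and each cycle edge
and the matching edges at its two endpoints, get colors differing by an element of
`{2,3,4,5}`. -/
theorem odd_cycle_coloring (n : ℕ) (hodd : Odd n) (hn : 7 ≤ n) (c : ZMod n → ZMod 2)
    (h : ∃ k' : ZMod n, c k' = c (k' + 1) ∧ c (k' + 2) = c (k' + 3) ∧ c (k' + 1) ≠ c (k' + 2)) :
    ∃ f : ZMod n → ZMod 7, ∀ i : ZMod n,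
      f i - f (i + 1) ∈ ({2, 3, 4, 5} : Set (ZMod 7)) ∧
      f i - iota (c i) ∈ ({2, 3, 4, 5} : Set (ZMod 7)) ∧
      f i - iota (c (i + 1)) ∈ ({2, 3, 4, 5} : Set (ZMod 7)) := by
  obtain ⟨k, hk⟩ := h
  obtain ⟨f, hf⟩ := exists_isCycleColoring (c := fun i => c (i + k)) hodd (by omega)
    (by simpa only [zero_add, add_comm _ k, add_zero] using hk)
  exact ⟨_, hf.of_comp_add_right⟩
end

section
/- Let n be an odd integer with n ≥ 9 and let α be an involution of ZMod n (a permutation with α ∘ α = id) with α(5) = 5. Suppose that for each i ∈ {2,3} there is an orbit of the action on ZMod n of the subgroup of permutations generated by α and τ_i containing no point fixed by α and no point fixed by τ_i. Then at least one of the following six cases holds: (a) α(2) = 7 and α(3) = 8; (b) α(4) = 6; (c) α(2) = 4, α(6) = 7 and α(3) = 8; (d) α(2) = 6, α(4) = 7 and α(3) = 8; (e) α(2) = 7, α(3) = 4 and α(6) = 8; (f) α(2) = 7, α(3) = 6 and α(4) = 8. -/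
/-!
Fix `i ∈ {2, 3}` and an orbit `O` of `⟨α, τ_i⟩` free of fixed points. Since `τ_i` moves only
`i, …, i+5`, the orbit lies in that window; it avoids the `α`-fixed point `5` and therefore also
the `τ_i`-partner of `5`. What is left is a set of four points `a, b, c, d` on which
`τ_i = (a d)(b c)`, and `α` is a fixed-point-free involution of the `τ_i`-invariant set `O`
inside it: so `α` pairs `a` with `d`, or `b` with `c`, or `a` with one of `b, c` and the
remaining two points with each other. For `i = 2` the four points are `2, 4, 6, 7`, for `i = 3`
they are `3, 4, 6, 8`, and combining the two lists of possibilities gives the six cases.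
-/

open Equiv Function MulAction Set

theorem ZMod.natCast_eq_natCast_iff_of_lt {n a b : ℕ} (ha : a < n) (hb : b < n) :
    (a : ZMod n) = b ↔ a = b := by
  rw [ZMod.natCast_eq_natCast_iff', Nat.mod_eq_of_lt ha, Nat.mod_eq_of_lt hb]

theorem MulAction.mapsTo_orbit_closure {G X : Type*} [Group G] [MulAction G X] {S : Set G}
    {g : G} (hg : g ∈ S) (x : X) :
    MapsTo (g • ·) (orbit (Subgroup.closure S) x) (orbit (Subgroup.closure S) x) :=
  fun _ hy => mem_orbit_of_mem_orbit (⟨g, Subgroup.subset_closure hg⟩ : Subgroup.closure S) hy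

section Involution

variable {X : Type*} {α τ : X → X} {a b c d : X}

theorem Function.Involutive.apply_eq_of_mem_four (hα : Involutive α) (hab : α a = b)
    (hac : a ≠ c) (hbc : b ≠ c) (hc : α c ≠ c) (hmem : α c ∈ ({a, b, c, d} : Set X)) :
    α c = d := by
  rcases hmem with h | h | h | h
  · exact absurd (by rw [← hab, ← h, hα]) hbc
  · exact absurd (by rw [← hα a, hab, ← h, hα]) hac
  · exact absurd h hc
  · exact h

theorem Function.Involutive.cases_of_subset_four {O : Set X} (hα : Involutive α)
    (hab : a ≠ b) (hac : a ≠ c) (hbc : b ≠ c) (hfree : ∀ y ∈ O, α y ≠ y)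
    (hαO : MapsTo α O O) (hτO : MapsTo τ O O) (hτb : τ b = c) (hτc : τ c = b) (hτd : τ d = a)
    (hsub : O ⊆ {a, b, c, d}) (hne : O.Nonempty) :
    α a = d ∨ α b = c ∨ (α a = b ∧ α c = d) ∨ (α a = c ∧ α b = d) := by
  by_cases ha : a ∈ O
  · rcases hsub (hαO ha) with h | h | h | h
    · exact absurd h (hfree a ha)
    · have hc : c ∈ O := hτb ▸ hτO (h ▸ hαO ha)
      exact Or.inr <| Or.inr <| Or.inl
        ⟨h, hα.apply_eq_of_mem_four h hac hbc (hfree c hc) (hsub (hαO hc))⟩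
    · have hb : b ∈ O := hτc ▸ hτO (h ▸ hαO ha)
      have hmem : α b ∈ ({a, c, b, d} : Set X) := insert_comm b c {d} ▸ hsub (hαO hb)
      exact Or.inr <| Or.inr <| Or.inr
        ⟨h, hα.apply_eq_of_mem_four h hab hbc.symm (hfree b hb) hmem⟩
    · exact Or.inl h
  · have hd : d ∉ O := fun hd => ha (hτd ▸ hτO hd)
    obtain ⟨y, hy⟩ := hne
    have hb : b ∈ O := by
      rcases hsub hy with rfl | rfl | rfl | rfl
      exacts [absurd hy ha, hy, hτc ▸ hτO hy, absurd hy hd]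
    rcases hsub (hαO hb) with h | h | h | h
    exacts [absurd (h ▸ hαO hb) ha, absurd h (hfree b hb), Or.inr (Or.inl h),
      absurd (h ▸ hαO hb) hd]

end Involution

theorem Function.Involutive.cases_of_orbit_closure {X : Type*} {α τ : Perm X}
    {x a b c d p q : X} (hα : Involutive α) (hab : a ≠ b) (hac : a ≠ c) (hbc : b ≠ c)
    (hτb : τ b = c) (hτc : τ c = b) (hτd : τ d = a) (hτq : τ q = p) (hp : α p = p)
    (hsupp : ∀ y, τ y ≠ y → y = a ∨ y = b ∨ y = c ∨ y = d ∨ y = p ∨ y = q)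
    (hO : ∀ y ∈ orbit (Subgroup.closure {α, τ}) x, α y ≠ y ∧ τ y ≠ y) :
    α a = d ∨ α b = c ∨ (α a = b ∧ α c = d) ∨ (α a = c ∧ α b = d) := by
  set O := orbit (Subgroup.closure {α, τ}) x
  have hαO : MapsTo α O O := mapsTo_orbit_closure (mem_insert α {τ}) x
  have hτO : MapsTo τ O O := mapsTo_orbit_closure (mem_insert_of_mem α (mem_singleton τ)) x
  have hpO : p ∉ O := fun h => (hO p h).1 hp
  have hqO : q ∉ O := fun h => hpO (hτq ▸ hτO h)
  refine hα.cases_of_subset_four hab hac hbc (fun y hy => (hO y hy).1) hαO hτO hτb hτc hτd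
    (fun y hy => ?_) ⟨x, mem_orbit_self x⟩
  rcases hsupp y (hO y hy).2 with h | h | h | h | h | h
  exacts [Or.inl h, Or.inr (Or.inl h), Or.inr (Or.inr (Or.inl h)), Or.inr (Or.inr (Or.inr h)),
    absurd (h ▸ hy) hpO, absurd (h ▸ hy) hqO]

section Tau

variable {n : ℕ} {i : ZMod n}

theorem eq_add_of_tau_apply_ne {y : ZMod n} (h : tau i y ≠ y) :
    y = i ∨ y = i + 1 ∨ y = i + 2 ∨ y = i + 3 ∨ y = i + 4 ∨ y = i + 5 := by
  contrapose! h
  obtain ⟨h₀, h₁, h₂, h₃, h₄, h₅⟩ := h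
  rw [tau, Perm.mul_apply, Perm.mul_apply, swap_apply_of_ne_of_ne h₂ h₄,
    swap_apply_of_ne_of_ne h₁ h₃, swap_apply_of_ne_of_ne h₀ h₅]

theorem tau_apply_add_one (hn : 6 ≤ n) : tau i (i + 1) = i + 3 := by
  -- Numerals are rewritten as casts of naturals below `n`, whose equality is decided in `ℕ`.
  simp (disch := omega) only [tau, Perm.mul_apply, swap_apply_def, add_right_inj, add_eq_left,
    ← Nat.cast_one (R := ZMod n), ← Nat.cast_zero (R := ZMod n), ← Nat.cast_ofNat (R := ZMod n),
    ZMod.natCast_eq_natCast_iff_of_lt, Nat.reduceEqDiff, reduceIte]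

theorem tau_apply_add_two (hn : 6 ≤ n) : tau i (i + 2) = i + 4 := by
  simp (disch := omega) only [tau, Perm.mul_apply, swap_apply_def, add_right_inj, add_eq_left,
    ← Nat.cast_one (R := ZMod n), ← Nat.cast_zero (R := ZMod n), ← Nat.cast_ofNat (R := ZMod n),
    ZMod.natCast_eq_natCast_iff_of_lt, Nat.reduceEqDiff, reduceIte]

theorem tau_apply_add_three (hn : 6 ≤ n) : tau i (i + 3) = i + 1 := by
  simp (disch := omega) only [tau, Perm.mul_apply, swap_apply_def, add_right_inj, add_eq_left,
    ← Nat.cast_one (R := ZMod n), ← Nat.cast_zero (R := ZMod n), ← Nat.cast_ofNat (R := ZMod n),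
    ZMod.natCast_eq_natCast_iff_of_lt, Nat.reduceEqDiff, reduceIte]

theorem tau_apply_add_four (hn : 6 ≤ n) : tau i (i + 4) = i + 2 := by
  simp (disch := omega) only [tau, Perm.mul_apply, swap_apply_def, add_right_inj, add_eq_left,
    ← Nat.cast_one (R := ZMod n), ← Nat.cast_zero (R := ZMod n), ← Nat.cast_ofNat (R := ZMod n),
    ZMod.natCast_eq_natCast_iff_of_lt, Nat.reduceEqDiff, reduceIte]

theorem tau_apply_add_five (hn : 6 ≤ n) : tau i (i + 5) = i := by
  simp (disch := omega) only [tau, Perm.mul_apply, swap_apply_def, add_right_inj, add_eq_left,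
    ← Nat.cast_one (R := ZMod n), ← Nat.cast_zero (R := ZMod n), ← Nat.cast_ofNat (R := ZMod n),
    ZMod.natCast_eq_natCast_iff_of_lt, Nat.reduceEqDiff, reduceIte]

variable {α : Perm (ZMod n)} {x : ZMod n}

theorem tau_cases_of_apply_add_three_eq_self (hn : 6 ≤ n) (hα : Involutive α)
    (hfix : α (i + 3) = i + 3)
    (hO : ∀ y ∈ orbit (Subgroup.closure {α, tau i}) x, α y ≠ y ∧ tau i y ≠ y) :
    α i = i + 5 ∨ α (i + 2) = i + 4 ∨ (α i = i + 2 ∧ α (i + 4) = i + 5) ∨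
      (α i = i + 4 ∧ α (i + 2) = i + 5) := by
  obtain ⟨h₀₂, h₀₄, h₂₄⟩ : i ≠ i + 2 ∧ i ≠ i + 4 ∧ i + 2 ≠ i + 4 := by
    simp (disch := omega) only [ne_eq, add_right_inj, left_eq_add, ← Nat.cast_zero (R := ZMod n),
      ← Nat.cast_ofNat (R := ZMod n), ZMod.natCast_eq_natCast_iff_of_lt, Nat.reduceEqDiff,
      not_false_eq_true, and_self]
  refine hα.cases_of_orbit_closure h₀₂ h₀₄ h₂₄ (tau_apply_add_two hn) (tau_apply_add_four hn)
    (tau_apply_add_five hn) (tau_apply_add_one hn) hfix (fun y hy => ?_) hO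
  have := eq_add_of_tau_apply_ne hy
  tauto

theorem tau_cases_of_apply_add_two_eq_self (hn : 6 ≤ n) (hα : Involutive α)
    (hfix : α (i + 2) = i + 2)
    (hO : ∀ y ∈ orbit (Subgroup.closure {α, tau i}) x, α y ≠ y ∧ tau i y ≠ y) :
    α i = i + 5 ∨ α (i + 1) = i + 3 ∨ (α i = i + 1 ∧ α (i + 3) = i + 5) ∨
      (α i = i + 3 ∧ α (i + 1) = i + 5) := by
  obtain ⟨h₀₁, h₀₃, h₁₃⟩ : i ≠ i + 1 ∧ i ≠ i + 3 ∧ i + 1 ≠ i + 3 := by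
    simp (disch := omega) only [ne_eq, add_right_inj, left_eq_add, ← Nat.cast_zero (R := ZMod n),
      ← Nat.cast_one (R := ZMod n), ← Nat.cast_ofNat (R := ZMod n),
      ZMod.natCast_eq_natCast_iff_of_lt, Nat.reduceEqDiff, not_false_eq_true, and_self]
  refine hα.cases_of_orbit_closure h₀₁ h₀₃ h₁₃ (tau_apply_add_one hn) (tau_apply_add_three hn)
    (tau_apply_add_five hn) (tau_apply_add_four hn) hfix (fun y hy => ?_) hO
  have := eq_add_of_tau_apply_ne hy
  tauto

end Tau

theorem case_analysis_odd_general (n : ℕ) (hn : 9 ≤ n)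
    (α : Equiv.Perm (ZMod n)) (hα : ∀ x, α (α x) = x)
    (hhalf : α 5 = 5)
    (hclosed : ∀ i ∈ ({2, 3} : Set (ZMod n)), ∃ x : ZMod n,
      ∀ y ∈ MulAction.orbit (Subgroup.closure {α, tau i} : Subgroup (Equiv.Perm (ZMod n))) x,
        α y ≠ y ∧ tau i y ≠ y) :
    (α 2 = 7 ∧ α 3 = 8) ∨
    (α 4 = 6) ∨
    (α 2 = 4 ∧ α 6 = 7 ∧ α 3 = 8) ∨
    (α 2 = 6 ∧ α 4 = 7 ∧ α 3 = 8) ∨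
    (α 2 = 7 ∧ α 3 = 4 ∧ α 6 = 8) ∨
    (α 2 = 7 ∧ α 3 = 6 ∧ α 4 = 8) := by
  obtain ⟨x₂, hx₂⟩ := hclosed 2 (by simp)
  obtain ⟨x₃, hx₃⟩ := hclosed 3 (by simp)
  have h₂ := tau_cases_of_apply_add_three_eq_self (by omega) hα (by norm_num [hhalf]) hx₂
  have h₃ := tau_cases_of_apply_add_two_eq_self (by omega) hα (by norm_num [hhalf]) hx₃
  norm_num at h₂ h₃
  obtain ⟨h₂₈, h₃₇, h₇₈⟩ : (2 : ZMod n) ≠ 8 ∧ (3 : ZMod n) ≠ 7 ∧ (7 : ZMod n) ≠ 8 := by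
    simp (disch := omega) only [ne_eq, ← Nat.cast_ofNat (R := ZMod n),
      ZMod.natCast_eq_natCast_iff_of_lt, Nat.reduceEqDiff, not_false_eq_true, and_self]
  have h₄₂ : α 2 = 4 → α 4 = 2 := fun h => h ▸ hα 2
  have h₄₃ : α 3 = 4 → α 4 = 3 := fun h => h ▸ hα 3
  -- Each of the four unlisted combinations gives `α 6` or `α 4` two distinct values.
  grind

/-- The case analysis in the proof of Lemma 2: if `n ≥ 9` is odd, `α` is an involution
of `ZMod n` fixing `5`, and for each `i ∈ {2,3}` some orbit of the subgroup generated
by `α` and `τ_i` contains no fixed point of `α` and no fixed point of `τ_i`, then one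
of the six listed cases holds. -/
theorem case_analysis_odd (n : ℕ) (hodd : Odd n) (hn : 9 ≤ n)
    (α : Equiv.Perm (ZMod n)) (hα : ∀ x, α (α x) = x)
    (hhalf : α 5 = 5)
    (hclosed : ∀ i ∈ ({2, 3} : Set (ZMod n)), ∃ x : ZMod n,
      ∀ y ∈ MulAction.orbit (Subgroup.closure {α, tau i} : Subgroup (Equiv.Perm (ZMod n))) x,
        α y ≠ y ∧ tau i y ≠ y) :
    (α 2 = 7 ∧ α 3 = 8) ∨
    (α 4 = 6) ∨
    (α 2 = 4 ∧ α 6 = 7 ∧ α 3 = 8) ∨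
    (α 2 = 6 ∧ α 4 = 7 ∧ α 3 = 8) ∨
    (α 2 = 7 ∧ α 3 = 4 ∧ α 6 = 8) ∨
    (α 2 = 7 ∧ α 3 = 6 ∧ α 4 = 8) :=
  case_analysis_odd_general n hn α hα hhalf hclosed
end
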